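/- If sequences of probability measures μ_i ⇒ μ and ν_i ⇒ ν weakly on ℝ^d, then the PRW distance is lower semicontinuous: PW̄_{p,k}(μ, ν) ≤ liminf_{i→∞} PW̄_{p,k}(μ_i, ν_i). -/

import Mathlib

open MeasureTheory Filter Topology
open scoped ENNReal BoundedContinuousFunction

noncomputable def Wp {α : Type*} [MeasurableSpace α] [PseudoMetricSpace α]
    (p : ℝ) (μ ν : Measure α) : ℝ≥0∞ :=
  ⨅ π ∈ {π : Measure (α × α) | π.map Prod.fst = μ ∧ π.map Prod.snd = ν},
    (∫⁻ z, ENNReal.ofReal (dist z.1 z.2 ^ p) ∂π) ^ (1 / p)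

def Stiefel (d k : ℕ) : Set (Matrix (Fin d) (Fin k) ℝ) :=
  {E | E.transpose * E = 1}

noncomputable def proj {d k : ℕ} (E : Matrix (Fin d) (Fin k) ℝ)
    (x : EuclideanSpace ℝ (Fin d)) : EuclideanSpace ℝ (Fin k) :=
  (WithLp.equiv 2 (Fin k → ℝ)).symm (E.transpose.mulVec ((WithLp.equiv 2 (Fin d → ℝ)) x))

noncomputable def PRW (p : ℝ) {d : ℕ} (k : ℕ)
    (μ ν : Measure (EuclideanSpace ℝ (Fin d))) : ℝ≥0∞ :=
  ⨆ E ∈ Stiefel d k, Wp p (μ.map (proj E)) (ν.map (proj E))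

def WeakConv {α : Type*} [MeasurableSpace α] [TopologicalSpace α]
    (μs : ℕ → Measure α) (μ : Measure α) : Prop :=
  ∀ f : α →ᵇ ℝ, Tendsto (fun i => ∫ x, f x ∂(μs i)) atTop (𝓝 (∫ x, f x ∂μ))

noncomputable def empMeasure {α : Type*} [MeasurableSpace α] {n : ℕ} (X : Fin n → α) :
    Measure α :=
  (n : ℝ≥0∞)⁻¹ • ∑ i, Measure.dirac (X i)

instance matMeas {d k : ℕ} : MeasurableSpace (Matrix (Fin d) (Fin k) ℝ) :=
  MeasurableSpace.pi

noncomputable def IPRW (p : ℝ) {d k : ℕ} (σ : Measure (Matrix (Fin d) (Fin k) ℝ))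
    (μ ν : Measure (EuclideanSpace ℝ (Fin d))) : ℝ≥0∞ :=
  (∫⁻ E, Wp p (μ.map (proj E)) (ν.map (proj E)) ^ p ∂σ) ^ (1 / p)

noncomputable def projL {d k : ℕ} (E : Matrix (Fin d) (Fin k) ℝ) :
    EuclideanSpace ℝ (Fin d) →L[ℝ] EuclideanSpace ℝ (Fin k) :=
  LinearMap.toContinuousLinearMap (Matrix.toEuclideanLin E.transpose)

/-!
If `Wp p (μs i) (νs i) < b` along a subsequence, choose couplings of cost below `b`. Their
marginals converge weakly, hence are tight, so the couplings are tight too and Prokhorov's theorem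
extracts a weakly convergent subsequence. Its limit couples `μ` and `ν`, and since `dist ^ p` is
continuous and nonnegative, the portmanteau theorem bounds its cost by `b`. `PRW` is a supremum
of `Wp` over pushforwards along the continuous maps `proj E`, which preserve weak convergence.
-/

open Set

section WeakConvergence

variable {α : Type*} [MeasurableSpace α] [TopologicalSpace α] [OpensMeasurableSpace α]

lemma weakConv_iff_tendsto {μs : ℕ → Measure α} {μ : Measure α}
    [∀ i, IsProbabilityMeasure (μs i)] [IsProbabilityMeasure μ] :
    WeakConv μs μ ↔ Tendsto (β := ProbabilityMeasure α) (fun i => ⟨μs i, inferInstance⟩) atTop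
      (𝓝 ⟨μ, inferInstance⟩) :=
  (ProbabilityMeasure.tendsto_iff_forall_integral_tendsto (F := atTop)
    (μs := fun i => ⟨μs i, inferInstance⟩) (μ := ⟨μ, inferInstance⟩)).symm

lemma WeakConv.map {β : Type*} [MeasurableSpace β] [TopologicalSpace β] [BorelSpace β]
    {μs : ℕ → Measure α} {μ : Measure α} (h : WeakConv μs μ) {f : α → β} (hf : Continuous f) :
    WeakConv (fun i => (μs i).map f) (μ.map f) := by
  intro g
  simp only [integral_map hf.measurable.aemeasurable g.continuous.measurable.aestronglyMeasurable]
  exact h (g.compContinuous ⟨f, hf⟩)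

lemma ProbabilityMeasure.lintegral_le_liminf_of_tendsto [HasOuterApproxClosed α]
    {πs : ℕ → ProbabilityMeasure α} {π : ProbabilityMeasure α} (h : Tendsto πs atTop (𝓝 π))
    {f : α → ℝ} (hf : Continuous f) (hf₀ : 0 ≤ f) :
    ∫⁻ x, ENNReal.ofReal (f x) ∂π ≤ liminf (fun i => ∫⁻ x, ENNReal.ofReal (f x) ∂(πs i)) atTop :=
  lintegral_le_liminf_lintegral_of_forall_isOpen_measure_le_liminf_measure hf hf₀
    fun _ hG => ProbabilityMeasure.le_liminf_measure_open_of_tendsto h hG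

end WeakConvergence

section Couplings

variable {α : Type*} [MeasurableSpace α] [PseudoMetricSpace α]

lemma exists_coupling_lt_of_Wp_lt {p : ℝ} {μ ν : Measure α} {b : ℝ≥0∞} (h : Wp p μ ν < b) :
    ∃ π : Measure (α × α), (π.map Prod.fst = μ ∧ π.map Prod.snd = ν) ∧
      (∫⁻ z, ENNReal.ofReal (dist z.1 z.2 ^ p) ∂π) ^ (1 / p) < b := by
  simpa [Wp, iInf_lt_iff] using h

lemma Wp_le_of_coupling {p : ℝ} {μ ν : Measure α} {π : Measure (α × α)}
    (hfst : π.map Prod.fst = μ) (hsnd : π.map Prod.snd = ν) :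
    Wp p μ ν ≤ (∫⁻ z, ENNReal.ofReal (dist z.1 z.2 ^ p) ∂π) ^ (1 / p) :=
  iInf₂_le π ⟨hfst, hsnd⟩

end Couplings

section Polish

variable {α : Type*} [MetricSpace α] [CompleteSpace α] [SecondCountableTopology α]
  [MeasurableSpace α] [BorelSpace α]

lemma ProbabilityMeasure.isTightMeasureSet_range_of_tendsto {μs : ℕ → ProbabilityMeasure α}
    {μ : ProbabilityMeasure α} (h : Tendsto μs atTop (𝓝 μ)) :
    IsTightMeasureSet (range fun i => (μs i : Measure α)) := by
  have hcompact : IsCompact (closure (range μs)) :=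
    h.isCompact_insert_range.closure_of_subset (subset_insert _ _)
  refine (isTightMeasureSet_of_isCompact_closure hcompact).subset ?_
  rintro _ ⟨i, rfl⟩
  exact ⟨μs i, mem_range_self i, rfl⟩

lemma exists_subseq_tendsto_coupling {μs νs : ℕ → ProbabilityMeasure α}
    {μ ν : ProbabilityMeasure α} (hμ : Tendsto μs atTop (𝓝 μ)) (hν : Tendsto νs atTop (𝓝 ν))
    (πs : ℕ → ProbabilityMeasure (α × α))
    (hfst : ∀ i, (πs i).map measurable_fst.aemeasurable = μs i)
    (hsnd : ∀ i, (πs i).map measurable_snd.aemeasurable = νs i) :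
    ∃ π : ProbabilityMeasure (α × α), ∃ φ : ℕ → ℕ, StrictMono φ ∧
      Tendsto (πs ∘ φ) atTop (𝓝 π) ∧
      π.map measurable_fst.aemeasurable = μ ∧ π.map measurable_snd.aemeasurable = ν := by
  have htight : IsTightMeasureSet {(π : Measure (α × α)) | π ∈ range πs} := by
    refine IsTightMeasureSet.prodMk ?_ ?_
    · refine (ProbabilityMeasure.isTightMeasureSet_range_of_tendsto hμ).subset ?_
      rintro _ ⟨_, ⟨_, ⟨i, rfl⟩, rfl⟩, rfl⟩
      exact ⟨i, by simp [← hfst i, Measure.fst]⟩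
    · refine (ProbabilityMeasure.isTightMeasureSet_range_of_tendsto hν).subset ?_
      rintro _ ⟨_, ⟨_, ⟨i, rfl⟩, rfl⟩, rfl⟩
      exact ⟨i, by simp [← hsnd i, Measure.snd]⟩
  obtain ⟨π, -, φ, hφ, hlim⟩ := (isCompact_closure_of_isTightMeasureSet htight).tendsto_subseq
    fun i => subset_closure (mem_range_self i)
  refine ⟨π, φ, hφ, hlim, ?_, ?_⟩
  · refine tendsto_nhds_unique ((ProbabilityMeasure.continuous_map continuous_fst).tendsto π
      |>.comp hlim) ?_
    simpa [Function.comp_def, hfst] using hμ.comp hφ.tendsto_atTop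
  · refine tendsto_nhds_unique ((ProbabilityMeasure.continuous_map continuous_snd).tendsto π
      |>.comp hlim) ?_
    simpa [Function.comp_def, hsnd] using hν.comp hφ.tendsto_atTop

variable {p : ℝ} {μs νs : ℕ → Measure α} {μ ν : Measure α}
  [∀ i, IsProbabilityMeasure (μs i)] [∀ i, IsProbabilityMeasure (νs i)]
  [IsProbabilityMeasure μ] [IsProbabilityMeasure ν]

lemma Wp_le_of_forall_lt (hp : 0 < p) (hμ : WeakConv μs μ) (hν : WeakConv νs ν) {b : ℝ≥0∞}
    (hb : ∀ i, Wp p (μs i) (νs i) < b) : Wp p μ ν ≤ b := by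
  choose πs hπs hcost using fun i => exists_coupling_lt_of_Wp_lt (hb i)
  have hprob (i : ℕ) : IsProbabilityMeasure (πs i) := by
    have : IsProbabilityMeasure ((πs i).map Prod.fst) := by rw [(hπs i).1]; infer_instance
    exact Measure.isProbabilityMeasure_of_map Prod.fst
  obtain ⟨π, φ, -, hlim, hfst, hsnd⟩ := exists_subseq_tendsto_coupling
    (weakConv_iff_tendsto.mp hμ) (weakConv_iff_tendsto.mp hν) (fun i => ⟨πs i, hprob i⟩)
    (fun i => Subtype.ext ((ProbabilityMeasure.toMeasure_map _ _).trans (hπs i).1))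
    (fun i => Subtype.ext ((ProbabilityMeasure.toMeasure_map _ _).trans (hπs i).2))
  have hcost_cont : Continuous fun z : α × α => dist z.1 z.2 ^ p :=
    (continuous_fst.dist continuous_snd).rpow_const fun _ => Or.inr hp.le
  calc Wp p μ ν ≤ (∫⁻ z, ENNReal.ofReal (dist z.1 z.2 ^ p) ∂(π : Measure (α × α))) ^ (1 / p) :=
        Wp_le_of_coupling (by simpa using congrArg ProbabilityMeasure.toMeasure hfst)
          (by simpa using congrArg ProbabilityMeasure.toMeasure hsnd)
    _ ≤ (liminf (fun n => ∫⁻ z, ENNReal.ofReal (dist z.1 z.2 ^ p) ∂(πs (φ n))) atTop) ^ (1 / p) :=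
        ENNReal.rpow_le_rpow (ProbabilityMeasure.lintegral_le_liminf_of_tendsto hlim hcost_cont
          fun _ => by positivity) (by positivity)
    _ = liminf (fun n => (∫⁻ z, ENNReal.ofReal (dist z.1 z.2 ^ p) ∂(πs (φ n))) ^ (1 / p)) atTop :=
        OrderIso.liminf_apply (ENNReal.orderIsoRpow (1 / p) (by positivity))
    _ ≤ b := liminf_le_of_frequently_le' (Frequently.of_forall fun n => (hcost (φ n)).le)

theorem Wp_le_liminf_of_weakConv (hp : 0 < p) (hμ : WeakConv μs μ) (hν : WeakConv νs ν) :
    Wp p μ ν ≤ liminf (fun i => Wp p (μs i) (νs i)) atTop := by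
  refine le_of_forall_gt_imp_ge_of_dense fun b hb => ?_
  obtain ⟨φ, hφ, hφb⟩ :=
    extraction_of_frequently_atTop (frequently_lt_of_liminf_lt (by isBoundedDefault) hb)
  exact Wp_le_of_forall_lt hp (fun f => (hμ f).comp hφ.tendsto_atTop)
    (fun f => (hν f).comp hφ.tendsto_atTop) hφb

end Polish

lemma coe_projL {d k : ℕ} (E : Matrix (Fin d) (Fin k) ℝ) : ⇑(projL E) = proj E := by
  funext x
  simp [projL, proj, Matrix.toEuclideanLin, Matrix.toLpLin_apply]

lemma continuous_proj {d k : ℕ} (E : Matrix (Fin d) (Fin k) ℝ) : Continuous (proj E) :=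
  coe_projL E ▸ (projL E).continuous

theorem stmt8 {d : ℕ} (k : ℕ) (p : ℝ) (hp : 1 ≤ p)
    (μs νs : ℕ → Measure (EuclideanSpace ℝ (Fin d)))
    (μ ν : Measure (EuclideanSpace ℝ (Fin d)))
    [∀ i, IsProbabilityMeasure (μs i)] [∀ i, IsProbabilityMeasure (νs i)]
    [IsProbabilityMeasure μ] [IsProbabilityMeasure ν]
    (hμ : WeakConv μs μ) (hν : WeakConv νs ν) :
    PRW p k μ ν ≤ liminf (fun i => PRW p k (μs i) (νs i)) atTop := by
  refine iSup₂_le fun E hE => ?_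
  have hproj := (continuous_proj E).measurable
  have (i : ℕ) := Measure.isProbabilityMeasure_map (μ := μs i) hproj.aemeasurable
  have (i : ℕ) := Measure.isProbabilityMeasure_map (μ := νs i) hproj.aemeasurable
  have := Measure.isProbabilityMeasure_map (μ := μ) hproj.aemeasurable
  have := Measure.isProbabilityMeasure_map (μ := ν) hproj.aemeasurable
  calc Wp p (μ.map (proj E)) (ν.map (proj E))
      ≤ liminf (fun i => Wp p ((μs i).map (proj E)) ((νs i).map (proj E))) atTop :=
        Wp_le_liminf_of_weakConv (by linarith) (hμ.map (continuous_proj E))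
          (hν.map (continuous_proj E))
    _ ≤ liminf (fun i => PRW p k (μs i) (νs i)) atTop :=
        liminf_le_liminf (Eventually.of_forall fun i =>
          le_iSup₂ (f := fun E (_ : E ∈ Stiefel d k) =>
            Wp p ((μs i).map (proj E)) ((νs i).map (proj E))) E hE)
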